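/- For every integer h, every integer m ≥ 0 and every real number x, q^x · E_{m,q}^{(h,1)}(x) = (q−1) E_{m+1,q}^{(h−1,1)}(x) + E_{m,q}^{(h−1,1)}(x). -/

import Mathlib

open Finset

/-- The q-number `[x]_q = (1 - q^x)/(1 - q)`, with `q^x = exp (x * log q)` (rpow). -/
noncomputable def qNum (q x : ℝ) : ℝ := (1 - q ^ x) / (1 - q)

/-- `[l]_{-q} = (1 - (-q)^l)/(1 + q)` for a natural number `l`. -/
noncomputable def qNumNeg (q : ℝ) (l : ℕ) : ℝ := (1 - (-q) ^ l) / (1 + q)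

/-- The higher-order q-Euler polynomial
`E_{m,q}^{(h,k)}(x) = ((1+q)^k/(1-q)^m) * Σ_{j=0}^m C(m,j) (-1)^j q^{jx} / Π_{i=0}^{k-1} (1 + q^{h+j-i})`. -/
noncomputable def qE (q : ℝ) (h : ℤ) (k m : ℕ) (x : ℝ) : ℝ :=
  ((1 + q) ^ k / (1 - q) ^ m) *
    ∑ j ∈ Finset.range (m + 1),
      (m.choose j : ℝ) * (-1) ^ j * q ^ ((j : ℝ) * x) /
        ∏ i ∈ Finset.range k, (1 + q ^ ((h : ℝ) + (j : ℝ) - (i : ℝ)))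

/-
With `t = q^x` and `g j = 1 / (1 + q^(c + j))`, the first-order polynomial is
`E_{m,q}^{(c,1)}(x) = (1+q)/(1-q)^m · Σ_j C(m,j) (-t)^j g(j)`, so the claim is Pascal's rule
`C(m+1,j) = C(m,j) + C(m,j-1)` applied to the sum for `E_{m+1,q}^{(h-1,1)}`: the shift `j ↦ j+1`
in the second half turns `g` for `h-1` into `g` for `h` and produces the factor `-t`.
-/

theorem Finset.sum_range_choose_succ_mul_neg_pow {R : Type*} [CommRing R] (t : R) (g : ℕ → R)
    (m : ℕ) :
    ∑ j ∈ range (m + 2), ((m + 1).choose j : R) * (-t) ^ j * g j =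
      ∑ j ∈ range (m + 1), (m.choose j : R) * (-t) ^ j * g j -
        t * ∑ j ∈ range (m + 1), (m.choose j : R) * (-t) ^ j * g (j + 1) := by
  have pascal := sum_choose_succ_mul (R := R) (fun j _ => (-t) ^ j * g j) m
  simp only [← mul_assoc] at pascal
  rw [pascal, sub_eq_add_neg, mul_sum, ← sum_neg_distrib]
  congr 1
  refine sum_congr rfl fun j _ => ?_
  ring

theorem qE_one_eq (q : ℝ) (hq : 0 ≤ q) (h : ℤ) (m : ℕ) (x : ℝ) :
    qE q h 1 m x = (1 + q) / (1 - q) ^ m *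
      ∑ j ∈ range (m + 1), (m.choose j : ℝ) * (-q ^ x) ^ j * (1 + q ^ ((h : ℝ) + j))⁻¹ := by
  simp only [qE, pow_one, prod_range_one, Nat.cast_zero, sub_zero]
  refine congrArg _ (sum_congr rfl fun j _ => ?_)
  rw [neg_pow (q ^ x), ← Real.rpow_mul_natCast hq, mul_comm x]
  ring

theorem stmt_5 (q : ℝ) (hq : 0 < q) (hq1 : q ≠ 1) (h : ℤ) (m : ℕ) (x : ℝ) :
    q ^ x * qE q h 1 m x = (q - 1) * qE q (h - 1) 1 (m + 1) x + qE q (h - 1) 1 m x := by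
  have one_sub_ne : (1 : ℝ) - q ≠ 0 := sub_ne_zero.mpr hq1.symm
  have shift : ∀ j : ℕ, ((h - 1 : ℤ) : ℝ) + ((j + 1 : ℕ) : ℝ) = (h : ℝ) + j := fun j => by
    push_cast; ring
  simp only [qE_one_eq q hq.le, Finset.sum_range_choose_succ_mul_neg_pow, shift]
  field_simp
  ring
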